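/- Let x, y ∈ Y and l ∈ ℕ be such that x_i < ∞ and y_i < ∞ for 0 < i < l, and x_i = y_i = ∞ for all i ≥ l. Then the limit lim_{n→∞} D(Fⁿ(x), Fⁿ(y)) exists; in particular (x, y) is not a scrambled pair of F. -/

import Mathlib

/-!
On the coordinates `i ≥ 1`, `Fⁿ` just adds `n`, so every term `d_i` of `D(Fⁿx, Fⁿy)` tends to
`0` and, by dominated convergence, so does their weighted sum. On the circle, `Fⁿx` and `Fⁿy` are
rotated by partial sums of the rotation amounts; the relative rotation at time `k` only involves
the finitely many coordinates `i < l`, where it is a combination of `1/(a+k) - 1/(b+k) = O(1/k²)`.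
Hence the relative rotation converges and so does the circle distance.
-/

open Filter

noncomputable section

instance : Fact ((0:ℝ) < 1) := ⟨one_pos⟩

/-- The unit circle `𝕊 = ℝ/ℤ` (with the metric `d₀(x,y) = min{|x−y|, 1−|x−y|}`). -/
abbrev Circle1 := AddCircle (1 : ℝ)

/-- Points of the product space `Π_{i=0}^∞ X_i = 𝕊 × Π_{i≥1} (ℕ ∪ {∞})`:
the first component is the circle coordinate `x₀`, and the second component gives
the coordinates `x_i ∈ ℕ ∪ {∞}` for `i ≥ 1`. -/
abbrev Pt := Circle1 × (ℕ+ → ℕ∞)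

/-- `1/x` for `x ∈ ℕ ∪ {∞}`, with the convention `1/∞ = 0`. -/
noncomputable def einv (x : ℕ∞) : ℝ := ((x.toNat : ℕ) : ℝ)⁻¹

/-- The metric `d_i(x,y) = |1/x − 1/y|` on `ℕ ∪ {∞}` (for `i ≥ 1`). -/
noncomputable def dE (x y : ℕ∞) : ℝ := |einv x - einv y|

/-- The metric `D(x,y) = Σ_{i=0}^∞ d_i(x_i,y_i)/2^i` on the product space. -/
noncomputable def D (x y : Pt) : ℝ :=
  dist x.1 y.1 + ∑' i : ℕ+, dE (x.2 i) (y.2 i) / 2 ^ (i : ℕ)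

/-- `Y`: the set of points whose sequence of coordinates `(x_i)_{i≥1}` is a nondecreasing
sequence in `ℕ ∪ {∞}` (with `ℕ = {1,2,…}`). -/
def Y : Set Pt := {x | (∀ i, 1 ≤ x.2 i) ∧ Monotone x.2}

/-- The skew-product map `F`: `f₀(x) = (x₀ + Σ_{i≥1} 2^{−i}·(1/x_i)) mod 1` and
`f_i(x) = x_i + 1` for `i ≥ 1`, with `∞ + 1 = ∞`. -/
noncomputable def F (x : Pt) : Pt :=
  (x.1 + (((∑' i : ℕ+, (1 / 2 ^ (i : ℕ)) * einv (x.2 i)) : ℝ) : Circle1),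
   fun i => x.2 i + 1)

/-- `(x, y)` is a scrambled pair of `F`:
`liminf_{n→∞} D(Fⁿ(x), Fⁿ(y)) = 0` and `limsup_{n→∞} D(Fⁿ(x), Fⁿ(y)) > 0`. -/
def ScrambledPair (x y : Pt) : Prop :=
  liminf (fun n : ℕ => D (F^[n] x) (F^[n] y)) atTop = 0 ∧
  0 < limsup (fun n : ℕ => D (F^[n] x) (F^[n] y)) atTop

lemma einv_nonneg (a : ℕ∞) : 0 ≤ einv a := by
  unfold einv; positivity

lemma einv_le_one (a : ℕ∞) : einv a ≤ 1 := by
  unfold einv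
  rcases Nat.eq_zero_or_pos a.toNat with h | h
  · simp [h]
  · exact inv_le_one_of_one_le₀ (by exact_mod_cast h)

@[simp] lemma einv_top : einv ⊤ = 0 := by simp [einv]

lemma einv_natCast_add (m k : ℕ) : einv ((m : ℕ∞) + k) = ((m : ℝ) + k)⁻¹ := by
  rw [← Nat.cast_add, einv, ENat.toNat_natCast, Nat.cast_add]

lemma dE_le_one (a b : ℕ∞) : dE a b ≤ 1 :=
  abs_sub_le_of_nonneg_of_le (einv_nonneg a) (einv_le_one a) (einv_nonneg b) (einv_le_one b)

lemma tendsto_einv_add_atTop (a : ℕ∞) : Tendsto (fun k : ℕ => einv (a + k)) atTop (nhds 0) := by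
  induction a using ENat.recTopCoe with
  | top => simp
  | coe m =>
    simp only [einv_natCast_add]
    exact tendsto_inv_atTop_zero.comp
      (tendsto_atTop_add_const_left _ _ tendsto_natCast_atTop_atTop)

lemma summable_inv_add_sub_inv_add {a b : ℝ} (ha : 0 ≤ a) (hb : 0 ≤ b) :
    Summable fun k : ℕ => (a + k)⁻¹ - (b + k)⁻¹ := by
  rw [← summable_nat_add_iff 1]
  have hdom : Summable fun k : ℕ => |b - a| * ((k + 1 : ℕ) ^ 2 : ℝ)⁻¹ :=
    ((summable_nat_add_iff 1).2 (Real.summable_nat_pow_inv.2 one_lt_two)).mul_left _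
  refine hdom.of_norm_bounded fun k => ?_
  have hk : (0 : ℝ) < (k + 1 : ℕ) := by positivity
  have hA : ((k + 1 : ℕ) : ℝ) ≤ a + (k + 1 : ℕ) := by linarith
  have hB : ((k + 1 : ℕ) : ℝ) ≤ b + (k + 1 : ℕ) := by linarith
  rw [Real.norm_eq_abs, inv_sub_inv (hk.trans_le hA).ne' (hk.trans_le hB).ne',
    add_sub_add_right_eq_sub, abs_div, abs_of_pos (mul_pos (hk.trans_le hA) (hk.trans_le hB)),
    div_eq_mul_inv, sq]
  gcongr

lemma summable_einv_add_sub_einv_add {a b : ℕ∞} (hab : a = ⊤ ↔ b = ⊤) :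
    Summable fun k : ℕ => einv (a + k) - einv (b + k) := by
  induction a using ENat.recTopCoe with
  | top => simp [hab.1 rfl]
  | coe m =>
    induction b using ENat.recTopCoe with
    | top => simp at hab
    | coe n =>
      simp only [einv_natCast_add]
      exact summable_inv_add_sub_inv_add m.cast_nonneg n.cast_nonneg

lemma summable_one_div_two_pow_pnat : Summable fun i : ℕ+ => (1 : ℝ) / 2 ^ (i : ℕ) := by
  simpa [Function.comp_def] using
    summable_geometric_two.comp_injective (i := ((↑) : ℕ+ → ℕ)) PNat.coe_injective

def rotationAt (x : Pt) (k : ℕ) : ℝ :=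
  ∑' i : ℕ+, (1 / 2 ^ (i : ℕ)) * einv (x.2 i + k)

lemma summable_rotationAt_terms (x : Pt) (k : ℕ) :
    Summable fun i : ℕ+ => (1 / 2 ^ (i : ℕ)) * einv (x.2 i + k) :=
  summable_one_div_two_pow_pnat.of_nonneg_of_le
    (fun i => mul_nonneg (by positivity) (einv_nonneg _))
    (fun i => mul_le_of_le_one_right (by positivity) (einv_le_one _))

lemma F_iterate_snd (x : Pt) (n : ℕ) : (F^[n] x).2 = fun i => x.2 i + n := by
  induction n with
  | zero => simp
  | succ n ih =>
    rw [Function.iterate_succ_apply', F, ih]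
    funext i
    push_cast
    rw [add_assoc]

lemma F_iterate_fst (x : Pt) (n : ℕ) :
    (F^[n] x).1 = x.1 + ↑(∑ k ∈ Finset.range n, rotationAt x k) := by
  induction n with
  | zero => simp
  | succ n ih =>
    rw [Function.iterate_succ_apply', F, ih, F_iterate_snd, Finset.sum_range_succ,
      AddCircle.coe_add, add_assoc]
    rfl

lemma D_F_iterate (x y : Pt) (n : ℕ) :
    D (F^[n] x) (F^[n] y) =
      dist (x.1 + ↑(∑ k ∈ Finset.range n, (rotationAt x k - rotationAt y k))) y.1 +
        ∑' i : ℕ+, dE (x.2 i + n) (y.2 i + n) / 2 ^ (i : ℕ) := by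
  rw [D, F_iterate_fst, F_iterate_fst, F_iterate_snd, F_iterate_snd, Finset.sum_sub_distrib,
    AddCircle.coe_sub, ← dist_add_right _ y.1, add_assoc, sub_add_cancel]

lemma tendsto_tsum_dE_F_iterate (x y : Pt) :
    Tendsto (fun n : ℕ => ∑' i : ℕ+, dE (x.2 i + n) (y.2 i + n) / 2 ^ (i : ℕ)) atTop
      (nhds 0) := by
  have hterm (i : ℕ+) :
      Tendsto (fun n : ℕ => dE (x.2 i + n) (y.2 i + n) / 2 ^ (i : ℕ)) atTop (nhds 0) := by
    simpa [dE] using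
      (((tendsto_einv_add_atTop _).sub (tendsto_einv_add_atTop _)).abs).div_const (2 ^ (i : ℕ))
  simpa using tendsto_tsum_of_dominated_convergence summable_one_div_two_pow_pnat hterm
    (Eventually.of_forall fun n i => by
      rw [norm_div, Real.norm_eq_abs, dE, abs_abs, norm_pow, Real.norm_ofNat]
      exact div_le_div_of_nonneg_right (dE_le_one _ _) (by positivity))

lemma summable_rotationAt_sub (x y : Pt) (s : Finset ℕ+)
    (hfin : ∀ i ∈ s, x.2 i ≠ ⊤ ∧ y.2 i ≠ ⊤) (hinf : ∀ i ∉ s, x.2 i = ⊤ ∧ y.2 i = ⊤) :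
    Summable fun k => rotationAt x k - rotationAt y k := by
  have hsplit (k : ℕ) : rotationAt x k - rotationAt y k =
      ∑ i ∈ s, 1 / 2 ^ (i : ℕ) * (einv (x.2 i + k) - einv (y.2 i + k)) := by
    rw [rotationAt, rotationAt,
      ← (summable_rotationAt_terms x k).tsum_sub (summable_rotationAt_terms y k),
      tsum_eq_sum (s := s) fun i hi => by simp [(hinf i hi).1, (hinf i hi).2]]
    simp only [mul_sub]
  simp only [hsplit]
  refine summable_sum fun i hi => (summable_einv_add_sub_einv_add ?_).mul_left _
  simp [(hfin i hi).1, (hfin i hi).2]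

lemma not_scrambledPair_of_tendsto {x y : Pt} {L : ℝ}
    (h : Tendsto (fun n : ℕ => D (F^[n] x) (F^[n] y)) atTop (nhds L)) :
    ¬ ScrambledPair x y := by
  rintro ⟨hliminf, hlimsup⟩
  rw [h.liminf_eq] at hliminf
  rw [h.limsup_eq, hliminf] at hlimsup
  exact hlimsup.false

theorem claim4_not_scrambled_general
    (x y : Pt) (l : ℕ+)
    (hfin : ∀ i : ℕ+, i < l → x.2 i ≠ ⊤ ∧ y.2 i ≠ ⊤)
    (hinf : ∀ i : ℕ+, l ≤ i → x.2 i = ⊤ ∧ y.2 i = ⊤) :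
    (∃ L : ℝ, Tendsto (fun n : ℕ => D (F^[n] x) (F^[n] y)) atTop (nhds L)) ∧
    ¬ ScrambledPair x y := by
  have hrel : Summable fun k => rotationAt x k - rotationAt y k :=
    summable_rotationAt_sub x y (Finset.Iio l) (fun i hi => hfin i (Finset.mem_Iio.1 hi))
      (fun i hi => hinf i (not_lt.1 (Finset.mem_Iio.not.1 hi)))
  have hcircle : Continuous fun t : ℝ => dist (x.1 + (t : Circle1)) y.1 :=
    (continuous_const.add (AddCircle.continuous_mk' 1)).dist continuous_const
  have hlim := ((hcircle.tendsto _).comp hrel.hasSum.tendsto_sum_nat).add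
    (tendsto_tsum_dE_F_iterate x y)
  simp only [← D_F_iterate, Function.comp_def] at hlim
  exact ⟨⟨_, hlim⟩, not_scrambledPair_of_tendsto hlim⟩

/-- Claim 4: let `x, y ∈ Y` and `l ∈ ℕ` be such that `x_i < ∞` and `y_i < ∞` for
`0 < i < l`, and `x_i = y_i = ∞` for all `i ≥ l`. Then `lim_{n→∞} D(Fⁿ(x), Fⁿ(y))` exists;
in particular `(x, y)` is not a scrambled pair of `F`. -/
theorem claim4_not_scrambled
    (x y : Pt) (hx : x ∈ Y) (hy : y ∈ Y) (l : ℕ+)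
    (hfin : ∀ i : ℕ+, i < l → x.2 i ≠ ⊤ ∧ y.2 i ≠ ⊤)
    (hinf : ∀ i : ℕ+, l ≤ i → x.2 i = ⊤ ∧ y.2 i = ⊤) :
    (∃ L : ℝ, Tendsto (fun n : ℕ => D (F^[n] x) (F^[n] y)) atTop (nhds L)) ∧
    ¬ ScrambledPair x y :=
  claim4_not_scrambled_general x y l hfin hinf

end
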